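/- arXiv:2003.11677 — 8 statements merged into one kernel-verified Lean document; each statement's English description precedes it below -/
import Mathlib

section
/- Let V be a finite set, d a positive integer, and t > 0 a granularity. Suppose for each u ∈ V the strategy function h_u : (Fin d → ℝ) → ℝ satisfies 0 ≤ h_u(x) ≤ 1 for all x, is monotone, and is DR-submodular. Suppose the set function f : Finset V → ℝ is monotone and submodular. Then the mixture g(x) = Σ_{S ⊆ V} f(S) · ∏_{u ∈ S} h_u(x) · ∏_{v ∈ V \ S} (1 − h_v(x)) is DR-submodular: for all x ≤ y (componentwise) and all i ∈ Fin d, g(x + t·e_i) − g(x) ≥ g(y + t·e_i) − g(y). (Paper's Lemma 5, DR-submodularity part.) -/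
open Finset

/-- The mixture of a set function `f` under independent seeding with
probabilities `h u x`:
`g(x) = Σ_{S ⊆ V} f(S) · ∏_{u ∈ S} h_u(x) · ∏_{v ∈ V \ S} (1 − h_v(x))`. -/
noncomputable def mixture {V : Type*} [Fintype V] [DecidableEq V] {d : ℕ}
    (h : V → (Fin d → ℝ) → ℝ) (f : Finset V → ℝ) (x : Fin d → ℝ) : ℝ :=
  ∑ S : Finset V, f S * (∏ u ∈ S, h u x) * (∏ v ∈ Sᶜ, (1 - h v x))


set_option linter.unusedSectionVars false

section Aux
variable {V : Type*} [Fintype V] [DecidableEq V]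

/-- Multilinear extension over ground set `A`. -/
noncomputable def MFA (f : Finset V → ℝ) (A : Finset V) (p : V → ℝ) : ℝ :=
  ∑ S ∈ A.powerset, f S * (∏ v ∈ S, p v) * ∏ v ∈ A \ S, (1 - p v)

lemma MFA_congr (f : Finset V → ℝ) (A : Finset V) (p q : V → ℝ)
    (hpq : ∀ v ∈ A, p v = q v) : MFA f A p = MFA f A q := by
  unfold MFA
  refine Finset.sum_congr rfl fun S hS => ?_
  rw [mem_powerset] at hS
  rw [show (∏ v ∈ S, p v) = ∏ v ∈ S, q v from
        Finset.prod_congr rfl fun v hv => hpq v (hS hv),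
      show (∏ v ∈ A \ S, (1 - p v)) = ∏ v ∈ A \ S, (1 - q v) from
        Finset.prod_congr rfl fun v hv => by rw [hpq v (mem_sdiff.mp hv).1]]

lemma MFA_sub (f g : Finset V → ℝ) (A : Finset V) (p : V → ℝ) :
    MFA (fun S => f S - g S) A p = MFA f A p - MFA g A p := by
  unfold MFA
  rw [← Finset.sum_sub_distrib]
  exact Finset.sum_congr rfl fun S _ => by ring

lemma MFA_insert (f : Finset V → ℝ) (B : Finset V) (u : V) (hu : u ∉ B) (p : V → ℝ) :
    MFA f (insert u B) p =
      (1 - p u) * MFA f B p + p u * MFA (fun S => f (insert u S)) B p := by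
  unfold MFA
  rw [Finset.sum_powerset_insert hu, Finset.mul_sum, Finset.mul_sum]
  congr 1
  · refine Finset.sum_congr rfl fun S hS => ?_
    rw [mem_powerset] at hS
    have huS : u ∉ S := fun hc => hu (hS hc)
    have h1 : insert u B \ S = insert u (B \ S) := by
      ext x; simp only [mem_sdiff, mem_insert]
      constructor
      · rintro ⟨hx | hx, hx2⟩
        · exact Or.inl hx
        · exact Or.inr ⟨hx, hx2⟩
      · rintro (rfl | ⟨hx, hx2⟩)
        · exact ⟨Or.inl rfl, huS⟩
        · exact ⟨Or.inr hx, hx2⟩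
    have h2 : u ∉ B \ S := fun hc => hu (mem_sdiff.mp hc).1
    rw [h1, Finset.prod_insert h2]; ring
  · refine Finset.sum_congr rfl fun S hS => ?_
    rw [mem_powerset] at hS
    have huS : u ∉ S := fun hc => hu (hS hc)
    have h1 : insert u B \ insert u S = B \ S := by
      ext x; simp only [mem_sdiff, mem_insert]
      constructor
      · rintro ⟨hx | hx, hx2⟩
        · exact absurd (Or.inl hx) hx2
        · exact ⟨hx, fun hc => hx2 (Or.inr hc)⟩
      · rintro ⟨hx, hx2⟩
        exact ⟨Or.inr hx, by rintro (rfl | hc); exact hu hx; exact hx2 hc⟩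
    rw [h1, Finset.prod_insert huS]; ring

lemma MFA_nonneg (f : Finset V → ℝ) (A : Finset V) (p : V → ℝ)
    (hf : ∀ S, S ⊆ A → 0 ≤ f S) (hp : ∀ v ∈ A, 0 ≤ p v ∧ p v ≤ 1) :
    0 ≤ MFA f A p := by
  refine Finset.sum_nonneg fun S hS => ?_
  rw [mem_powerset] at hS
  refine mul_nonneg (mul_nonneg (hf S hS) (Finset.prod_nonneg fun v hv => (hp v (hS hv)).1))
    (Finset.prod_nonneg fun v hv => ?_)
  have := (hp v (mem_sdiff.mp hv).1).2; linarith

lemma MFA_le_MFA (f g : Finset V → ℝ) (A : Finset V) (p : V → ℝ)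
    (hfg : ∀ S, S ⊆ A → f S ≤ g S) (hp : ∀ v ∈ A, 0 ≤ p v ∧ p v ≤ 1) :
    MFA f A p ≤ MFA g A p := by
  have := MFA_nonneg (fun S => g S - f S) A p
    (fun S hS => by show (0:ℝ) ≤ g S - f S; linarith [hfg S hS]) hp
  rw [MFA_sub] at this; linarith

lemma MFA_mono (A : Finset V) :
    ∀ (f : Finset V → ℝ) (p q : V → ℝ),
      (∀ S T : Finset V, S ⊆ T → T ⊆ A → f S ≤ f T) →
      (∀ v ∈ A, p v ≤ q v) →
      (∀ v ∈ A, 0 ≤ p v ∧ p v ≤ 1) → (∀ v ∈ A, 0 ≤ q v ∧ q v ≤ 1) →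
      MFA f A p ≤ MFA f A q := by
  induction A using Finset.induction with
  | empty => intro f p q _ _ _ _; simp [MFA]
  | @insert u B hu IH =>
    intro f p q hf hpq hp hq
    have hmemB : ∀ v ∈ B, v ∈ insert u B := fun v hv => mem_insert_of_mem hv
    have humem : u ∈ insert u B := mem_insert_self u B
    rw [MFA_insert f B u hu p, MFA_insert f B u hu q]
    have hFle : MFA f B p ≤ MFA (fun S => f (insert u S)) B p :=
      MFA_le_MFA _ _ B p
        (fun S hS => hf S (insert u S) (subset_insert u S)
          (insert_subset_insert u hS))
        (fun v hv => hp v (hmemB v hv))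
    have hIH1 : MFA f B p ≤ MFA f B q :=
      IH f p q (fun S T hST hT => hf S T hST (hT.trans (subset_insert u B)))
        (fun v hv => hpq v (hmemB v hv)) (fun v hv => hp v (hmemB v hv))
        (fun v hv => hq v (hmemB v hv))
    have hIH2 : MFA (fun S => f (insert u S)) B p ≤ MFA (fun S => f (insert u S)) B q := by
      refine IH _ p q ?_ (fun v hv => hpq v (hmemB v hv)) (fun v hv => hp v (hmemB v hv))
        (fun v hv => hq v (hmemB v hv))
      intro S T hST hT
      exact hf (insert u S) (insert u T) (insert_subset_insert u hST)
        (insert_subset_insert u hT)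
    have h1 : (1 - p u) * MFA f B p + p u * MFA (fun S => f (insert u S)) B p ≤
        (1 - q u) * MFA f B p + q u * MFA (fun S => f (insert u S)) B p := by
      have hpu := hpq u humem
      nlinarith [hpu, hFle]
    have h2 : (1 - q u) * MFA f B p + q u * MFA (fun S => f (insert u S)) B p ≤
        (1 - q u) * MFA f B q + q u * MFA (fun S => f (insert u S)) B q := by
      have hqu := hq u humem
      have : 0 ≤ 1 - q u := by linarith [hqu.2]
      nlinarith [hIH1, hIH2, hqu.1]
    linarith

lemma MFA_neg (f : Finset V → ℝ) (A : Finset V) (p : V → ℝ) :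
    MFA (fun S => -f S) A p = -MFA f A p := by
  unfold MFA
  rw [← Finset.sum_neg_distrib]
  exact Finset.sum_congr rfl fun S _ => by ring

lemma MFA_anti (f : Finset V → ℝ) (A : Finset V)
    (hf : ∀ S T : Finset V, S ⊆ T → T ⊆ A → f T ≤ f S)
    (p q : V → ℝ) (hpq : ∀ v ∈ A, p v ≤ q v)
    (hp : ∀ v ∈ A, 0 ≤ p v ∧ p v ≤ 1) (hq : ∀ v ∈ A, 0 ≤ q v ∧ q v ≤ 1) :
    MFA f A q ≤ MFA f A p := by
  have := MFA_mono A (fun S => -f S) p q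
    (fun S T hST hT => by simpa using hf S T hST hT) hpq hp hq
  rw [MFA_neg, MFA_neg] at this; linarith

lemma MFA_update_sub (f : Finset V → ℝ) (u : V) (p : V → ℝ) (r s : ℝ) :
    MFA f univ (Function.update p u s) - MFA f univ (Function.update p u r) =
      (s - r) * MFA (fun S => f (insert u S) - f S) (univ.erase u) p := by
  have hins : insert u (univ.erase u) = (univ : Finset V) :=
    insert_erase (mem_univ u)
  have hne : ∀ x : ℝ, ∀ v ∈ univ.erase u, Function.update p u x v = p v := by
    intro x v hv
    exact Function.update_of_ne (ne_of_mem_erase hv) x p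
  have hu : u ∉ univ.erase u := notMem_erase u univ
  have key : ∀ x : ℝ, MFA f univ (Function.update p u x) =
      (1 - x) * MFA f (univ.erase u) p +
        x * MFA (fun S => f (insert u S)) (univ.erase u) p := by
    intro x
    conv_lhs => rw [← hins]
    rw [MFA_insert f _ u hu, Function.update_self,
      MFA_congr f _ _ p (hne x), MFA_congr _ _ _ p (hne x)]
  rw [key s, key r, MFA_sub]
  ring

lemma MFA_main (f : Finset V → ℝ)
    (f_mono : ∀ S T : Finset V, S ⊆ T → f S ≤ f T)
    (f_submod : ∀ S T : Finset V, S ⊆ T → ∀ u : V, u ∉ T →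
      f (insert u T) - f T ≤ f (insert u S) - f S)
    (a a' b b' : V → ℝ)
    (ha : ∀ v, 0 ≤ a v ∧ a v ≤ 1) (ha' : ∀ v, 0 ≤ a' v ∧ a' v ≤ 1)
    (hb : ∀ v, 0 ≤ b v ∧ b v ≤ 1) (hb' : ∀ v, 0 ≤ b' v ∧ b' v ≤ 1)
    (hab : ∀ v, a v ≤ b v) (hab' : ∀ v, a' v ≤ b' v)
    (hbb' : ∀ v, b v ≤ b' v)
    (hDR : ∀ v, b' v - b v ≤ a' v - a v) :
    ∀ C : Finset V,
      MFA f univ (C.piecewise b' b) - MFA f univ b ≤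
        MFA f univ (C.piecewise a' a) - MFA f univ a := by
  intro C
  induction C using Finset.induction with
  | empty => simp [Finset.piecewise_empty]
  | @insert u C hu IH =>
    set Pa := C.piecewise a' a with hPa
    set Pb := C.piecewise b' b with hPb
    have hPau : Pa u = a u := Finset.piecewise_eq_of_notMem _ _ _ hu
    have hPbu : Pb u = b u := Finset.piecewise_eq_of_notMem _ _ _ hu
    have stepa : MFA f univ ((insert u C).piecewise a' a) - MFA f univ Pa =
        (a' u - a u) * MFA (fun S => f (insert u S) - f S) (univ.erase u) Pa := by
      have hupd : Function.update Pa u (a u) = Pa := by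
        rw [← hPau]; exact Function.update_eq_self u Pa
      have h2 := MFA_update_sub f u Pa (a u) (a' u)
      rw [hupd] at h2
      rw [Finset.piecewise_insert]
      exact h2
    have stepb : MFA f univ ((insert u C).piecewise b' b) - MFA f univ Pb =
        (b' u - b u) * MFA (fun S => f (insert u S) - f S) (univ.erase u) Pb := by
      have hupd : Function.update Pb u (b u) = Pb := by
        rw [← hPbu]; exact Function.update_eq_self u Pb
      have h2 := MFA_update_sub f u Pb (b u) (b' u)
      rw [hupd] at h2
      rw [Finset.piecewise_insert]
      exact h2
    -- bounds for piecewise points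
    have hPab : ∀ v, Pa v ≤ Pb v := by
      intro v
      by_cases hv : v ∈ C
      · rw [hPa, hPb, Finset.piecewise_eq_of_mem _ _ _ hv,
          Finset.piecewise_eq_of_mem _ _ _ hv]; exact hab' v
      · rw [hPa, hPb, Finset.piecewise_eq_of_notMem _ _ _ hv,
          Finset.piecewise_eq_of_notMem _ _ _ hv]; exact hab v
    have hPa01 : ∀ v, 0 ≤ Pa v ∧ Pa v ≤ 1 := by
      intro v
      by_cases hv : v ∈ C
      · rw [hPa, Finset.piecewise_eq_of_mem _ _ _ hv]; exact ha' v
      · rw [hPa, Finset.piecewise_eq_of_notMem _ _ _ hv]; exact ha v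
    have hPb01 : ∀ v, 0 ≤ Pb v ∧ Pb v ≤ 1 := by
      intro v
      by_cases hv : v ∈ C
      · rw [hPb, Finset.piecewise_eq_of_mem _ _ _ hv]; exact hb' v
      · rw [hPb, Finset.piecewise_eq_of_notMem _ _ _ hv]; exact hb v
    have gnn : 0 ≤ MFA (fun S => f (insert u S) - f S) (univ.erase u) Pb :=
      MFA_nonneg _ _ _ (fun S _ => by linarith [f_mono S (insert u S) (subset_insert u S)])
        (fun v _ => hPb01 v)
    have ganti : MFA (fun S => f (insert u S) - f S) (univ.erase u) Pb ≤
        MFA (fun S => f (insert u S) - f S) (univ.erase u) Pa := by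
      refine MFA_anti _ _ ?_ Pa Pb (fun v _ => hPab v) (fun v _ => hPa01 v)
        (fun v _ => hPb01 v)
      intro S T hST hT
      exact f_submod S T hST u (fun hc => (notMem_erase u univ) (hT hc))
    have hstep : (b' u - b u) * MFA (fun S => f (insert u S) - f S) (univ.erase u) Pb ≤
        (a' u - a u) * MFA (fun S => f (insert u S) - f S) (univ.erase u) Pa := by
      have h1 : 0 ≤ b' u - b u := by linarith [hbb' u]
      have h2 := hDR u
      nlinarith [gnn, ganti]
    linarith [IH, stepa, stepb, hstep]

lemma mixture_eq_MFA {d : ℕ} (h : V → (Fin d → ℝ) → ℝ) (f : Finset V → ℝ)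
    (x : Fin d → ℝ) : mixture h f x = MFA f univ (fun u => h u x) := by
  unfold mixture MFA
  rw [Finset.powerset_univ]
  exact Finset.sum_congr rfl fun S _ => by rw [Finset.compl_eq_univ_sdiff]

end Aux

/-- Paper's Lemma 5 (DR-submodularity part): if each strategy function `h u`
is `[0,1]`-valued, monotone and DR-submodular (with granularity `t > 0`), and
`f` is a monotone submodular set function, then the mixture
`g(x) = Σ_{S ⊆ V} f(S) · ∏_{u ∈ S} h_u(x) · ∏_{v ∉ S} (1 − h_v(x))`
is DR-submodular: for all `x ≤ y` and every coordinate `i`,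
`g(x + t·e_i) − g(x) ≥ g(y + t·e_i) − g(y)`. -/
theorem mixture_DR_submodular {V : Type*} [Fintype V] [DecidableEq V]
    (d : ℕ) (hd : 0 < d) (t : ℝ) (ht : 0 < t)
    (h : V → (Fin d → ℝ) → ℝ)
    (h_bounds : ∀ u : V, ∀ x : Fin d → ℝ, 0 ≤ h u x ∧ h u x ≤ 1)
    (h_mono : ∀ u : V, ∀ x y : Fin d → ℝ, x ≤ y → h u x ≤ h u y)
    (h_DR : ∀ u : V, ∀ x y : Fin d → ℝ, x ≤ y → ∀ i : Fin d,
      h u (y + Pi.single i t) - h u y ≤ h u (x + Pi.single i t) - h u x)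
    (f : Finset V → ℝ)
    (f_mono : ∀ S T : Finset V, S ⊆ T → f S ≤ f T)
    (f_submod : ∀ S T : Finset V, S ⊆ T → ∀ u : V, u ∉ T →
      f (insert u T) - f T ≤ f (insert u S) - f S) :
    ∀ x y : Fin d → ℝ, x ≤ y → ∀ i : Fin d,
      mixture h f (y + Pi.single i t) - mixture h f y ≤
        mixture h f (x + Pi.single i t) - mixture h f x := by
  intro x y hxy i
  have hsingle : ∀ j : Fin d, (0:ℝ) ≤ (Pi.single i t : Fin d → ℝ) j := by
    intro j; rcases eq_or_ne j i with rfl | hj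
    · simp; linarith
    · simp [Pi.single_apply, hj]
  have hx' : x ≤ x + Pi.single i t :=
    Pi.le_def.mpr fun j => le_add_of_nonneg_right (hsingle j)
  have hy' : y ≤ y + Pi.single i t :=
    Pi.le_def.mpr fun j => le_add_of_nonneg_right (hsingle j)
  have hxyi : x + Pi.single i t ≤ y + Pi.single i t :=
    Pi.le_def.mpr fun j => add_le_add_left (Pi.le_def.mp hxy j) _
  have key := MFA_main f f_mono f_submod
    (fun u => h u x) (fun u => h u (x + Pi.single i t))
    (fun u => h u y) (fun u => h u (y + Pi.single i t))
    (fun v => h_bounds v x) (fun v => h_bounds v _)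
    (fun v => h_bounds v y) (fun v => h_bounds v _)
    (fun v => h_mono v x y hxy) (fun v => h_mono v _ _ hxyi)
    (fun v => h_mono v y _ hy')
    (fun v => h_DR v x y hxy i) univ
  rw [Finset.piecewise_univ, Finset.piecewise_univ] at key
  rw [mixture_eq_MFA, mixture_eq_MFA, mixture_eq_MFA, mixture_eq_MFA]
  exact key
end

section
/- Let V be a finite set and d a positive integer. Suppose for each u ∈ V the strategy function h_u : (Fin d → ℝ) → ℝ satisfies 0 ≤ h_u(x) ≤ 1 for all x and is monotone, and suppose the set function f : Finset V → ℝ is monotone. Then the mixture g(x) = Σ_{S ⊆ V} f(S) · ∏_{u ∈ S} h_u(x) · ∏_{v ∈ V \ S} (1 − h_v(x)) is monotone: x ≤ y (componentwise) implies g(x) ≤ g(y). (Paper's Lemma 5, monotonicity part; implies monotonicity of f_c in Theorems 3 and 4.) -/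
open Finset

section Aux

variable {V : Type*} [Fintype V] [DecidableEq V]

noncomputable def mixAux (f : Finset V → ℝ) (p : V → ℝ) : ℝ :=
  ∑ S : Finset V, f S * (∏ u ∈ S, p u) * (∏ v ∈ Sᶜ, (1 - p v))

lemma mixAux_affine (f : Finset V → ℝ) (r : V → ℝ) (w : V) (t : ℝ) :
    mixAux f (Function.update r w t)
      = t * mixAux f (Function.update r w 1)
        + (1 - t) * mixAux f (Function.update r w 0) := by
  unfold mixAux
  rw [Finset.mul_sum, Finset.mul_sum, ← Finset.sum_add_distrib]
  refine Finset.sum_congr rfl fun S _ => ?_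
  by_cases hw : w ∈ S
  · have hc : w ∉ Sᶜ := by simp [hw]
    have hq : ∀ s : ℝ, ∏ v ∈ Sᶜ, (1 - Function.update r w s v) = ∏ v ∈ Sᶜ, (1 - r v) :=
      fun s => Finset.prod_congr rfl fun v hv => by
        rw [Function.update_of_ne (by rintro rfl; exact hc hv)]
    have hp : ∀ s : ℝ, ∏ u ∈ S, Function.update r w s u = s * ∏ u ∈ S.erase w, r u := by
      intro s
      rw [← Finset.mul_prod_erase S _ hw, Function.update_self]
      congr 1
      exact Finset.prod_congr rfl fun u hu => by
        rw [Function.update_of_ne (Finset.ne_of_mem_erase hu)]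
    rw [hq, hq, hq, hp, hp, hp]
    ring
  · have hc : w ∈ Sᶜ := by simp [hw]
    have hp : ∀ s : ℝ, ∏ u ∈ S, Function.update r w s u = ∏ u ∈ S, r u :=
      fun s => Finset.prod_congr rfl fun u hu => by
        rw [Function.update_of_ne (by rintro rfl; exact hw hu)]
    have hq : ∀ s : ℝ, ∏ v ∈ Sᶜ, (1 - Function.update r w s v)
        = (1 - s) * ∏ v ∈ Sᶜ.erase w, (1 - r v) := by
      intro s
      rw [← Finset.mul_prod_erase Sᶜ _ hc, Function.update_self]
      congr 1
      exact Finset.prod_congr rfl fun v hv => by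
        rw [Function.update_of_ne (Finset.ne_of_mem_erase hv)]
    rw [hq, hq, hq, hp, hp, hp]
    ring

lemma mixAux_zero_le_one (f : Finset V → ℝ)
    (f_mono : ∀ S T : Finset V, S ⊆ T → f S ≤ f T)
    (r : V → ℝ) (hr : ∀ u, 0 ≤ r u ∧ r u ≤ 1) (w : V) :
    mixAux f (Function.update r w 0) ≤ mixAux f (Function.update r w 1) := by
  unfold mixAux
  rw [← Finset.sum_filter_add_sum_filter_not Finset.univ (fun S => w ∈ S),
      ← Finset.sum_filter_add_sum_filter_not Finset.univ (fun S => w ∈ S)]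
  have hL : ∀ S ∈ Finset.univ.filter (fun S => w ∈ S),
      f S * (∏ u ∈ S, Function.update r w (0:ℝ) u) * (∏ v ∈ Sᶜ, (1 - Function.update r w (0:ℝ) v)) = 0 := by
    intro S hS
    rw [Finset.mem_filter] at hS
    rw [Finset.prod_eq_zero hS.2 (Function.update_self _ _ _)]
    ring
  have hR : ∀ S ∈ Finset.univ.filter (fun S => ¬ w ∈ S),
      f S * (∏ u ∈ S, Function.update r w (1:ℝ) u) * (∏ v ∈ Sᶜ, (1 - Function.update r w (1:ℝ) v)) = 0 := by
    intro S hS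
    rw [Finset.mem_filter] at hS
    have hc : w ∈ Sᶜ := by simp [hS.2]
    rw [Finset.prod_eq_zero hc (by rw [Function.update_self]; ring)]
    ring
  rw [Finset.sum_eq_zero hL, Finset.sum_eq_zero hR, zero_add, add_zero]
  have key : ∑ S ∈ Finset.univ.filter (fun S => w ∈ S),
      f S * (∏ u ∈ S, Function.update r w (1:ℝ) u) * (∏ v ∈ Sᶜ, (1 - Function.update r w (1:ℝ) v))
      = ∑ S ∈ Finset.univ.filter (fun S => ¬ w ∈ S),
      f (insert w S) * (∏ u ∈ insert w S, Function.update r w (1:ℝ) u)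
        * (∏ v ∈ (insert w S)ᶜ, (1 - Function.update r w (1:ℝ) v)) := by
    refine Finset.sum_nbij' (fun S => S.erase w) (fun S => insert w S) ?_ ?_ ?_ ?_ ?_
    · intro S hS; rw [Finset.mem_filter] at *; simp
    · intro S hS; rw [Finset.mem_filter] at *; simp
    · intro S hS; rw [Finset.mem_filter] at hS; exact Finset.insert_erase hS.2
    · intro S hS; rw [Finset.mem_filter] at hS; exact Finset.erase_insert hS.2
    · intro S hS; rw [Finset.mem_filter] at hS
      rw [Finset.insert_erase hS.2]
  rw [key]
  refine Finset.sum_le_sum fun S hS => ?_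
  rw [Finset.mem_filter] at hS
  have hwS : w ∉ S := hS.2
  have e1 : ∏ u ∈ insert w S, Function.update r w (1:ℝ) u = ∏ u ∈ S, r u := by
    rw [Finset.prod_insert hwS, Function.update_self, one_mul]
    exact Finset.prod_congr rfl fun u hu => by
      rw [Function.update_of_ne (by rintro rfl; exact hwS hu)]
  have e2 : ∏ v ∈ (insert w S)ᶜ, (1 - Function.update r w (1:ℝ) v)
      = ∏ v ∈ (insert w S)ᶜ, (1 - r v) := by
    refine Finset.prod_congr rfl fun v hv => ?_
    rw [Function.update_of_ne (by rintro rfl; simp at hv)]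
  have e3 : ∏ u ∈ S, Function.update r w (0:ℝ) u = ∏ u ∈ S, r u :=
    Finset.prod_congr rfl fun u hu => by
      rw [Function.update_of_ne (by rintro rfl; exact hwS hu)]
  have e4 : ∏ v ∈ Sᶜ, (1 - Function.update r w (0:ℝ) v)
      = ∏ v ∈ (insert w S)ᶜ, (1 - r v) := by
    have hc : w ∈ Sᶜ := by simp [hwS]
    rw [← Finset.mul_prod_erase Sᶜ _ hc, Function.update_self, sub_zero, one_mul]
    have : (insert w S)ᶜ = Sᶜ.erase w := by
      ext v; simp [and_comm]
    rw [this]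
    exact Finset.prod_congr rfl fun v hv => by
      rw [Function.update_of_ne (Finset.ne_of_mem_erase hv)]
  rw [e1, e2, e3, e4]
  have hP : 0 ≤ ∏ u ∈ S, r u := Finset.prod_nonneg fun u _ => (hr u).1
  have hQ : 0 ≤ ∏ v ∈ (insert w S)ᶜ, (1 - r v) :=
    Finset.prod_nonneg fun v _ => by linarith [(hr v).2]
  have := f_mono S (insert w S) (Finset.subset_insert w S)
  nlinarith [mul_nonneg hP hQ]

lemma mixAux_update_mono (f : Finset V → ℝ)
    (f_mono : ∀ S T : Finset V, S ⊆ T → f S ≤ f T)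
    (r : V → ℝ) (hr : ∀ u, 0 ≤ r u ∧ r u ≤ 1) (w : V) {t t' : ℝ} (htt' : t ≤ t') :
    mixAux f (Function.update r w t) ≤ mixAux f (Function.update r w t') := by
  have e1 := mixAux_affine f r w t
  have e2 := mixAux_affine f r w t'
  have h01 := mixAux_zero_le_one f f_mono r hr w
  nlinarith [mul_nonneg (sub_nonneg.2 htt') (sub_nonneg.2 h01)]

lemma mixAux_mono (f : Finset V → ℝ)
    (f_mono : ∀ S T : Finset V, S ⊆ T → f S ≤ f T)
    (p q : V → ℝ) (hp : ∀ u, 0 ≤ p u ∧ p u ≤ 1) (hq : ∀ u, 0 ≤ q u ∧ q u ≤ 1)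
    (hpq : ∀ u, p u ≤ q u) :
    mixAux f p ≤ mixAux f q := by
  have main : ∀ s : Finset V, mixAux f p ≤ mixAux f (s.piecewise q p) := by
    intro s
    induction s using Finset.induction_on with
    | empty => simp [Finset.piecewise_empty]
    | @insert a s ha ih =>
      refine le_trans ih ?_
      rw [Finset.piecewise_insert]
      have hrb : ∀ u, 0 ≤ s.piecewise q p u ∧ s.piecewise q p u ≤ 1 := by
        intro u
        by_cases hu : u ∈ s <;> simp [Finset.piecewise, hu, hp u, hq u]
      have h1 : s.piecewise q p = Function.update (s.piecewise q p) a (p a) := by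
        rw [← Finset.piecewise_eq_of_notMem s q p ha, Function.update_eq_self]
      calc mixAux f (s.piecewise q p)
          = mixAux f (Function.update (s.piecewise q p) a (p a)) := by rw [← h1]
        _ ≤ mixAux f (Function.update (s.piecewise q p) a (q a)) :=
            mixAux_update_mono f f_mono _ hrb a (hpq a)
  have := main Finset.univ
  rwa [Finset.piecewise_univ] at this

end Aux

/-- Paper's Lemma 5 (monotonicity part): if each strategy function `h u` is
`[0,1]`-valued and monotone, and the set function `f` is monotone, then the
mixture `g(x) = Σ_{S ⊆ V} f(S) · ∏_{u ∈ S} h_u(x) · ∏_{v ∉ S} (1 − h_v(x))`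
is monotone: `x ≤ y` componentwise implies `g(x) ≤ g(y)`. -/
theorem mixture_monotone {V : Type*} [Fintype V] [DecidableEq V]
    (d : ℕ) (hd : 0 < d)
    (h : V → (Fin d → ℝ) → ℝ)
    (h_bounds : ∀ u : V, ∀ x : Fin d → ℝ, 0 ≤ h u x ∧ h u x ≤ 1)
    (h_mono : ∀ u : V, ∀ x y : Fin d → ℝ, x ≤ y → h u x ≤ h u y)
    (f : Finset V → ℝ)
    (f_mono : ∀ S T : Finset V, S ⊆ T → f S ≤ f T) :
    ∀ x y : Fin d → ℝ, x ≤ y → mixture h f x ≤ mixture h f y := by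
  intro x y hxy
  have : mixture h f x = mixAux f (fun u => h u x) := rfl
  rw [this, show mixture h f y = mixAux f (fun u => h u y) from rfl]
  exact mixAux_mono f f_mono _ _ (fun u => h_bounds u x) (fun u => h_bounds u y)
    (fun u => h_mono u x y hxy)
end

section
/- Let V be a finite set and p : V → ℝ with 0 ≤ p_u ≤ 1 for all u. For all N₁, N₂ ⊆ V, Σ_{S ⊆ V} (∏_{u ∈ S} p_u · ∏_{v ∈ V \ S} (1 − p_v)) · 1[S ∩ N₁ ≠ ∅ ∧ S ∩ N₂ ≠ ∅] = H(N₁ ∩ N₂) + (1 − H(N₁ ∩ N₂)) · H(N₁ \ N₂) · H(N₂ \ N₁), where H(N) = 1 − ∏_{s∈N}(1 − p_s). (The probabilistic decomposition identity of Theorem 9 underlying the RE-sampling estimator of f_c.) -/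
open Finset

lemma sum_w_inter_empty {V : Type*} [Fintype V] [DecidableEq V]
    (p : V → ℝ) (N : Finset V) :
    ∑ S : Finset V,
        ((∏ u ∈ S, p u) * (∏ v ∈ Sᶜ, (1 - p v))) *
          (if S ∩ N = ∅ then (1 : ℝ) else 0) = ∏ s ∈ N, (1 - p s) := by
  classical
  have key : ∏ u ∈ (univ : Finset V),
      ((if u ∈ N then (0:ℝ) else p u) + (1 - p u)) = ∏ s ∈ N, (1 - p s) := by
    rw [← Finset.prod_subset (Finset.subset_univ N)]
    · apply Finset.prod_congr rfl
      intro u hu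
      simp [hu]
    · intro u _ hu
      simp [hu]
  rw [← key, Finset.prod_add]
  rw [Finset.powerset_univ]
  apply Finset.sum_congr rfl
  intro S _
  rw [← Finset.compl_eq_univ_sdiff]
  by_cases h : S ∩ N = ∅
  · have : ∀ u ∈ S, (if u ∈ N then (0:ℝ) else p u) = p u := by
      intro u hu
      have : u ∉ N := by
        intro hn
        exact (Finset.notMem_empty u) (h ▸ Finset.mem_inter.mpr ⟨hu, hn⟩)
      simp [this]
    rw [Finset.prod_congr rfl this]
    simp [h]
  · obtain ⟨u, hu⟩ := Finset.nonempty_iff_ne_empty.mpr h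
    rw [Finset.mem_inter] at hu
    rw [if_neg h, mul_zero]
    exact .symm <| mul_eq_zero_of_left (Finset.prod_eq_zero (f := fun i => if i ∈ N then (0:ℝ) else p i) hu.1 (if_pos hu.2)) _

/-- The probabilistic decomposition identity of Theorem 9 underlying the
RE-sampling estimator of `f_c`: with `H(N) = 1 − ∏_{s∈N}(1 − p s)`,
`Pr[S ∩ N₁ ≠ ∅ ∧ S ∩ N₂ ≠ ∅]
  = H(N₁ ∩ N₂) + (1 − H(N₁ ∩ N₂)) · H(N₁ \ N₂) · H(N₂ \ N₁)`. -/
theorem prob_hits_pair_decomposition {V : Type*} [Fintype V] [DecidableEq V]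
    (p : V → ℝ) (hp : ∀ u : V, 0 ≤ p u ∧ p u ≤ 1) (N₁ N₂ : Finset V) :
    ∑ S : Finset V,
        ((∏ u ∈ S, p u) * (∏ v ∈ Sᶜ, (1 - p v))) *
          (if (S ∩ N₁).Nonempty ∧ (S ∩ N₂).Nonempty then (1 : ℝ) else 0) =
      (1 - ∏ s ∈ N₁ ∩ N₂, (1 - p s)) +
        (∏ s ∈ N₁ ∩ N₂, (1 - p s)) *
          (1 - ∏ s ∈ N₁ \ N₂, (1 - p s)) * (1 - ∏ s ∈ N₂ \ N₁, (1 - p s)) := by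
  classical
  have hind : ∀ S : Finset V,
      (if (S ∩ N₁).Nonempty ∧ (S ∩ N₂).Nonempty then (1 : ℝ) else 0) =
      (if S ∩ (∅ : Finset V) = ∅ then (1:ℝ) else 0)
        - (if S ∩ N₁ = ∅ then (1:ℝ) else 0)
        - (if S ∩ N₂ = ∅ then (1:ℝ) else 0)
        + (if S ∩ (N₁ ∪ N₂) = ∅ then (1:ℝ) else 0) := by
    intro S
    have hU : S ∩ (N₁ ∪ N₂) = ∅ ↔ S ∩ N₁ = ∅ ∧ S ∩ N₂ = ∅ := by
      rw [Finset.inter_union_distrib_left, Finset.union_eq_empty]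
    by_cases h1 : S ∩ N₁ = ∅ <;> by_cases h2 : S ∩ N₂ = ∅ <;>
      simp [h1, h2, hU, Finset.nonempty_iff_ne_empty]
  have hsum : ∑ S : Finset V,
      ((∏ u ∈ S, p u) * (∏ v ∈ Sᶜ, (1 - p v))) *
        (if (S ∩ N₁).Nonempty ∧ (S ∩ N₂).Nonempty then (1 : ℝ) else 0)
      = (∏ s ∈ (∅ : Finset V), (1 - p s)) - (∏ s ∈ N₁, (1 - p s))
        - (∏ s ∈ N₂, (1 - p s)) + (∏ s ∈ N₁ ∪ N₂, (1 - p s)) := by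
    rw [← sum_w_inter_empty p ∅, ← sum_w_inter_empty p N₁,
      ← sum_w_inter_empty p N₂, ← sum_w_inter_empty p (N₁ ∪ N₂),
      ← Finset.sum_sub_distrib, ← Finset.sum_sub_distrib, ← Finset.sum_add_distrib]
    apply Finset.sum_congr rfl
    intro S _
    rw [hind S]
    ring
  rw [hsum]
  have h1 : (∏ s ∈ N₁, (1 - p s)) =
      (∏ s ∈ N₁ ∩ N₂, (1 - p s)) * (∏ s ∈ N₁ \ N₂, (1 - p s)) := by
    rw [mul_comm, ← Finset.sdiff_inter_self_left N₁ N₂,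
      Finset.prod_sdiff (Finset.inter_subset_left)]
  have h2 : (∏ s ∈ N₂, (1 - p s)) =
      (∏ s ∈ N₁ ∩ N₂, (1 - p s)) * (∏ s ∈ N₂ \ N₁, (1 - p s)) := by
    rw [mul_comm, Finset.inter_comm, ← Finset.sdiff_inter_self_left N₂ N₁,
      Finset.prod_sdiff (Finset.inter_subset_left)]
  have hU : (∏ s ∈ N₁ ∪ N₂, (1 - p s)) =
      (∏ s ∈ N₁, (1 - p s)) * (∏ s ∈ N₂ \ N₁, (1 - p s)) := by
    rw [mul_comm, ← Finset.union_sdiff_self_eq_union (s := N₁),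
      Finset.prod_union Finset.disjoint_sdiff]
    ring_nf
  rw [hU, h1, h2]
  simp
  ring
end

section
/- Let V be a finite set, N ⊆ V, d a positive integer and t > 0 a granularity. Suppose for each s ∈ N the function h_s : (Fin d → ℝ) → ℝ satisfies 0 ≤ h_s(x) ≤ 1 for all x, is monotone, and is DR-submodular. Then the function x ↦ 1 − ∏_{s ∈ N} (1 − h_s(x)) is monotone and DR-submodular. (DR-submodularity of the unbiased estimators for the lower and upper bounds, Equations (17) and (19).) -/
open Finset

private lemma single_nonneg' {d : ℕ} (i : Fin d) {t : ℝ} (ht : 0 < t) :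
    (0 : Fin d → ℝ) ≤ Pi.single i t := by
  intro j
  rcases eq_or_ne j i with rfl | hji
  · simp [ht.le]
  · simp [Pi.single_apply, hji]

private lemma prod_aux {V : Type*} [DecidableEq V]
    (d : ℕ) (t : ℝ) (ht : 0 < t)
    (h : V → (Fin d → ℝ) → ℝ) (N : Finset V)
    (h_bounds : ∀ s ∈ N, ∀ x : Fin d → ℝ, 0 ≤ h s x ∧ h s x ≤ 1)
    (h_mono : ∀ s ∈ N, ∀ x y : Fin d → ℝ, x ≤ y → h s x ≤ h s y)
    (h_DR : ∀ s ∈ N, ∀ x y : Fin d → ℝ, x ≤ y → ∀ i : Fin d,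
      h s (y + Pi.single i t) - h s y ≤ h s (x + Pi.single i t) - h s x) :
    (∀ x : Fin d → ℝ, 0 ≤ ∏ s ∈ N, (1 - h s x)) ∧
    (∀ x y : Fin d → ℝ, x ≤ y → ∏ s ∈ N, (1 - h s y) ≤ ∏ s ∈ N, (1 - h s x)) ∧
    (∀ x y : Fin d → ℝ, x ≤ y → ∀ i : Fin d,
      (∏ s ∈ N, (1 - h s y)) - ∏ s ∈ N, (1 - h s (y + Pi.single i t)) ≤
        (∏ s ∈ N, (1 - h s x)) - ∏ s ∈ N, (1 - h s (x + Pi.single i t))) := by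
  induction N using Finset.induction with
  | empty => refine ⟨?_, ?_, ?_⟩ <;> simp
  | @insert a S ha ih =>
    have hb := fun s hs => h_bounds s (mem_insert_of_mem hs)
    have hm := fun s hs => h_mono s (mem_insert_of_mem hs)
    have hD := fun s hs => h_DR s (mem_insert_of_mem hs)
    obtain ⟨Q0, Qanti, QDR⟩ := ih hb hm hD
    have hba := h_bounds a (mem_insert_self a S)
    have hma := h_mono a (mem_insert_self a S)
    have hDa := h_DR a (mem_insert_self a S)
    have fa0 : ∀ x, 0 ≤ 1 - h a x := fun x => by linarith [(hba x).2]
    have faanti : ∀ x y : Fin d → ℝ, x ≤ y → 1 - h a y ≤ 1 - h a x :=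
      fun x y hxy => by linarith [hma x y hxy]
    refine ⟨?_, ?_, ?_⟩
    · intro x
      rw [prod_insert ha]
      exact mul_nonneg (fa0 x) (Q0 x)
    · intro x y hxy
      rw [prod_insert ha, prod_insert ha]
      exact mul_le_mul (faanti x y hxy) (Qanti x y hxy) (Q0 y) (fa0 x)
    · intro x y hxy i
      rw [prod_insert ha, prod_insert ha, prod_insert ha, prod_insert ha]
      have hxx : x ≤ x + Pi.single i t := le_add_of_nonneg_right (single_nonneg' i ht)
      have hyy : y ≤ y + Pi.single i t := le_add_of_nonneg_right (single_nonneg' i ht)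
      have hxy' : x + Pi.single i t ≤ y + Pi.single i t := fun j => by
        exact add_le_add_left (hxy j) _
      -- abbreviations
      set fx := 1 - h a x
      set fx' := 1 - h a (x + Pi.single i t)
      set fy := 1 - h a y
      set fy' := 1 - h a (y + Pi.single i t)
      set Qx := ∏ s ∈ S, (1 - h s x)
      set Qx' := ∏ s ∈ S, (1 - h s (x + Pi.single i t))
      set Qy := ∏ s ∈ S, (1 - h s y)
      set Qy' := ∏ s ∈ S, (1 - h s (y + Pi.single i t))
      have hQdr : Qy - Qy' ≤ Qx - Qx' := QDR x y hxy i
      have hQy : 0 ≤ Qy - Qy' := by linarith [Qanti y (y + Pi.single i t) hyy]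
      have hfdr : fy - fy' ≤ fx - fx' := by
        have := hDa x y hxy i
        simp only [fx, fx', fy, fy']
        linarith
      have hfy : 0 ≤ fy - fy' := by
        have := hma y (y + Pi.single i t) hyy
        simp only [fy, fy']; linarith
      have hfax : 0 ≤ fy := fa0 y
      have hfxy : fy ≤ fx := faanti x y hxy
      have hQ'anti : Qy' ≤ Qx' := Qanti _ _ hxy'
      have hQ'0 : 0 ≤ Qy' := Q0 _
      -- fx*Qx - fx'*Qx' = fx*(Qx-Qx') + Qx'*(fx-fx')
      have key1 : fy * (Qy - Qy') ≤ fx * (Qx - Qx') :=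
        mul_le_mul hfxy hQdr hQy (le_trans hfax hfxy)
      have key2 : Qy' * (fy - fy') ≤ Qx' * (fx - fx') :=
        mul_le_mul hQ'anti hfdr hfy (le_trans hQ'0 hQ'anti)
      nlinarith [key1, key2]

/-- DR-submodularity (and monotonicity) of the unbiased estimators for the
lower and upper bounds (Equations (17) and (19)): if each `h s` is
`[0,1]`-valued, monotone and DR-submodular with granularity `t > 0`, then
`x ↦ 1 − ∏_{s ∈ N} (1 − h_s(x))` is monotone and DR-submodular. -/
theorem hitting_prob_monotone_DR_submodular {V : Type*} [DecidableEq V]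
    (N : Finset V) (d : ℕ) (hd : 0 < d) (t : ℝ) (ht : 0 < t)
    (h : V → (Fin d → ℝ) → ℝ)
    (h_bounds : ∀ s ∈ N, ∀ x : Fin d → ℝ, 0 ≤ h s x ∧ h s x ≤ 1)
    (h_mono : ∀ s ∈ N, ∀ x y : Fin d → ℝ, x ≤ y → h s x ≤ h s y)
    (h_DR : ∀ s ∈ N, ∀ x y : Fin d → ℝ, x ≤ y → ∀ i : Fin d,
      h s (y + Pi.single i t) - h s y ≤ h s (x + Pi.single i t) - h s x) :
    (∀ x y : Fin d → ℝ, x ≤ y →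
        1 - ∏ s ∈ N, (1 - h s x) ≤ 1 - ∏ s ∈ N, (1 - h s y)) ∧
      (∀ x y : Fin d → ℝ, x ≤ y → ∀ i : Fin d,
        (1 - ∏ s ∈ N, (1 - h s (y + Pi.single i t))) - (1 - ∏ s ∈ N, (1 - h s y)) ≤
          (1 - ∏ s ∈ N, (1 - h s (x + Pi.single i t))) - (1 - ∏ s ∈ N, (1 - h s x))) := by
  obtain ⟨_, Qanti, QDR⟩ := prod_aux d t ht h N h_bounds h_mono h_DR
  constructor
  · intro x y hxy
    linarith [Qanti x y hxy]
  · intro x y hxy i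
    linarith [QDR x y hxy i]
end

section
/- Let V = Fin 4 with nodes v₁ = 0, v₂ = 1, v₃ = 2, v₄ = 3, edge set E = {(v₁,v₂), (v₂,v₃), (v₄,v₃)}, live-edge relation r relating exactly the pairs (v₁,v₂) and (v₄,v₃), and activity strength A ≡ 1 on E. Then the activity function f_d satisfies f_d(∅) = 0, f_d({v₁}) = 1, f_d({v₄}) = 1 and f_d({v₁,v₄}) = 3; in particular f_d({v₄} ∪ {v₁}) − f_d({v₄}) > f_d(∅ ∪ {v₁}) − f_d(∅), so f_d is not submodular. (The counterexample realization in the proof of Theorem 3.) -/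
open Finset Classical

def reachable {V : Type*} (r : V → V → Prop) (S : Finset V) (v : V) : Prop :=
  ∃ s ∈ S, Relation.ReflTransGen r s v

noncomputable def activity {V : Type*} (r : V → V → Prop)
    (E : Finset (V × V)) (A : V × V → ℝ) (S : Finset V) : ℝ :=
  ∑ e ∈ E, if reachable r S e.1 ∧ reachable r S e.2 then A e else 0

private def rr : Fin 4 → Fin 4 → Prop := fun a b => (a = 0 ∧ b = 1) ∨ (a = 3 ∧ b = 2)

private lemma rtc_char (a b : Fin 4) (h : Relation.ReflTransGen rr a b) :
    a = b ∨ (a = 0 ∧ b = 1) ∨ (a = 3 ∧ b = 2) := by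
  induction h with
  | refl => left; rfl
  | tail h step ih =>
    rcases step with ⟨hc, hd⟩ | ⟨hc, hd⟩ <;> subst hc <;> subst hd <;>
      rcases ih with h | ⟨h1, h2⟩ | ⟨h1, h2⟩ <;> simp_all

private lemma reach_iff (S : Finset (Fin 4)) (v : Fin 4) :
    reachable rr S v ↔ v ∈ S ∨ (0 ∈ S ∧ v = 1) ∨ (3 ∈ S ∧ v = 2) := by
  constructor
  · rintro ⟨s, hs, h⟩
    rcases rtc_char s v h with h | ⟨h1, h2⟩ | ⟨h1, h2⟩ <;> subst_vars <;> simp_all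
  · rintro (h | ⟨h0, hv⟩ | ⟨h3, hv⟩)
    · exact ⟨v, h, Relation.ReflTransGen.refl⟩
    · exact ⟨0, h0, hv ▸ Relation.ReflTransGen.single (Or.inl ⟨rfl, rfl⟩)⟩
    · exact ⟨3, h3, hv ▸ Relation.ReflTransGen.single (Or.inr ⟨rfl, rfl⟩)⟩

/-- The counterexample realization in the proof of Theorem 3: on `V = Fin 4`
with edges `E = {(v₁,v₂), (v₂,v₃), (v₄,v₃)}`, live edges exactly `(v₁,v₂)` and
`(v₄,v₃)`, and unit activity strengths, the activity function `f_d` satisfies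
`f_d(∅) = 0`, `f_d({v₁}) = 1`, `f_d({v₄}) = 1`, `f_d({v₁,v₄}) = 3`; in
particular `f_d({v₄} ∪ {v₁}) − f_d({v₄}) > f_d(∅ ∪ {v₁}) − f_d(∅)`, so `f_d`
is not submodular. -/
theorem activity_not_submodular :
    let r : Fin 4 → Fin 4 → Prop := fun a b => (a = 0 ∧ b = 1) ∨ (a = 3 ∧ b = 2)
    let E : Finset (Fin 4 × Fin 4) := {(0, 1), (1, 2), (3, 2)}
    let A : Fin 4 × Fin 4 → ℝ := fun _ => 1
    activity r E A ∅ = 0 ∧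
      activity r E A {0} = 1 ∧
      activity r E A {3} = 1 ∧
      activity r E A {0, 3} = 3 ∧
      activity r E A ({3} ∪ {0}) - activity r E A {3} >
        activity r E A (∅ ∪ {0}) - activity r E A ∅ ∧
      ¬ (∀ S T : Finset (Fin 4), S ⊆ T → ∀ u : Fin 4, u ∉ T →
          activity r E A (insert u T) - activity r E A T ≤
            activity r E A (insert u S) - activity r E A S) := by
  intro r E A
  have hr : r = rr := rfl
  have h0 : activity r E A ∅ = 0 := by
    simp [activity, hr, reach_iff, E]
  have h1 : activity r E A {0} = 1 := by
    simp [activity, hr, reach_iff, E]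
    rfl
  have h3 : activity r E A {3} = 1 := by
    simp [activity, hr, reach_iff, E]
    rfl
  have h03 : activity r E A {0, 3} = 3 := by
    simp [activity, hr, reach_iff, E]
    norm_cast
    norm_num [A]
  have h30 : activity r E A ({3} ∪ {0}) = 3 := by
    have : ({3} ∪ {0} : Finset (Fin 4)) = {0, 3} := by decide
    rw [this, h03]
  have h0' : (∅ ∪ ({0} : Finset (Fin 4))) = {0} := by decide
  refine ⟨h0, h1, h3, h03, ?_, ?_⟩
  · rw [h30, h3, h0', h1, h0]; norm_num
  · intro h
    have := h ∅ {3} (Finset.empty_subset _) 0 (by decide)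
    have e1 : insert (0 : Fin 4) ({3} : Finset (Fin 4)) = {0, 3} := by decide
    have e2 : insert (0 : Fin 4) (∅ : Finset (Fin 4)) = {0} := by decide
    rw [e1, e2, h03, h3, h1, h0] at this
    norm_num at this
end

section
/- Let X be a nonempty finite set and let F, L, U : X → ℝ satisfy 0 ≤ L(x) ≤ F(x) ≤ U(x) for all x ∈ X. Let x_A* maximize F over X, x_U* maximize U over X, and x_L* maximize L over X, and let ρ ∈ [0,1] (playing the role of 1 − 1/e − ε). Let x_U, x_L ∈ X satisfy U(x_U) ≥ ρ·U(x_U*) and L(x_L) ≥ ρ·L(x_L*), and assume U(x_U) > 0 and F(x_A*) > 0. Then for every x_A ∈ X, max{F(x_L), F(x_A), F(x_U)} ≥ max{ F(x_U)/U(x_U), L(x_L*)/F(x_A*) } · ρ · F(x_A*). (The sandwich approximation inequality in the proof of Theorem 14, before the estimation step.) -/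
/-- The sandwich approximation inequality in the proof of Theorem 14 (before
the estimation step): if `0 ≤ L ≤ F ≤ U` on a nonempty finite set `X`,
`x_A*`, `x_U*`, `x_L*` are maximizers of `F`, `U`, `L` respectively,
`ρ ∈ [0,1]`, and `x_U`, `x_L` are `ρ`-approximate maximizers of `U` and `L`
with `U(x_U) > 0` and `F(x_A*) > 0`, then for every `x_A`,
`max{F(x_L), F(x_A), F(x_U)} ≥
  max{F(x_U)/U(x_U), L(x_L*)/F(x_A*)} · ρ · F(x_A*)`. -/
theorem sandwich_inequality {X : Type*} [Fintype X] [Nonempty X]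
    (F L U : X → ℝ)
    (hsand : ∀ x : X, 0 ≤ L x ∧ L x ≤ F x ∧ F x ≤ U x)
    (xAstar xUstar xLstar : X)
    (hA : ∀ x : X, F x ≤ F xAstar)
    (hU : ∀ x : X, U x ≤ U xUstar)
    (hL : ∀ x : X, L x ≤ L xLstar)
    (ρ : ℝ) (hρ : 0 ≤ ρ ∧ ρ ≤ 1)
    (xU xL : X)
    (hxU : U xU ≥ ρ * U xUstar)
    (hxL : L xL ≥ ρ * L xLstar)
    (hUpos : 0 < U xU) (hFpos : 0 < F xAstar) :
    ∀ xA : X,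
      max (max (F xL) (F xA)) (F xU) ≥
        max (F xU / U xU) (L xLstar / F xAstar) * (ρ * F xAstar) := by
  intro xA
  obtain ⟨hρ0, hρ1⟩ := hρ
  have hFU0 : 0 ≤ F xU := le_trans (hsand xU).1 (hsand xU).2.1
  have h1 : ρ * F xAstar ≤ U xU := by
    calc ρ * F xAstar ≤ ρ * U xUstar := by
          apply mul_le_mul_of_nonneg_left _ hρ0
          exact le_trans (hsand xAstar).2.2 (hU xAstar)
      _ ≤ U xU := hxU
  rcases max_cases (F xU / U xU) (L xLstar / F xAstar) with ⟨heq, _⟩ | ⟨heq, _⟩ <;> rw [heq]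
  · have : F xU / U xU * (ρ * F xAstar) ≤ F xU / U xU * U xU := by
      apply mul_le_mul_of_nonneg_left h1 (div_nonneg hFU0 hUpos.le)
    rw [div_mul_cancel₀ _ hUpos.ne'] at this
    exact le_trans this (le_max_right _ _)
  · have : L xLstar / F xAstar * (ρ * F xAstar) = ρ * L xLstar := by
      field_simp
    rw [this]
    exact le_trans (le_trans hxL (hsand xL).2.1) (le_max_of_le_left (le_max_left _ _))
end

section
/- Let X be a nonempty finite set, F, L, U : X → ℝ with 0 ≤ L(x) ≤ F(x) ≤ U(x) for all x ∈ X, x_A* a maximizer of F, x_U* a maximizer of U, x_L* a maximizer of L, ρ ∈ [0,1], and x_U, x_L, x_A ∈ X with U(x_U) ≥ ρ·U(x_U*), L(x_L) ≥ ρ·L(x_L*), U(x_U) > 0, F(x_A*) > 0. Let γ ∈ [0,1) and let x_sand ∈ {x_L, x_A, x_U} satisfy (1+γ)·F(x_sand) ≥ (1−γ)·max{F(x_L), F(x_A), F(x_U)}. Then F(x_sand) ≥ max{ F(x_U)/U(x_U), L(x_L*)/F(x_A*) } · ((1−γ)/(1+γ)) · ρ · F(x_A*). (Theorem 14: data-dependent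 approximation ratio of the sandwich approximation framework, with ρ = 1 − 1/e − ε.) -/
/-- Theorem 14: data-dependent approximation ratio of the sandwich
approximation framework (with `ρ = 1 − 1/e − ε`).  If `0 ≤ L ≤ F ≤ U` on a
nonempty finite set `X`, `x_A*`, `x_U*`, `x_L*` are maximizers of `F`, `U`,
`L`, `x_U`, `x_L` are `ρ`-approximate maximizers of `U` and `L`, and the
chosen `x_sand ∈ {x_L, x_A, x_U}` satisfies
`(1+γ)·F(x_sand) ≥ (1−γ)·max{F(x_L), F(x_A), F(x_U)}`, then
`F(x_sand) ≥ max{F(x_U)/U(x_U), L(x_L*)/F(x_A*)} · ((1−γ)/(1+γ)) · ρ · F(x_A*)`. -/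
theorem sandwich_approximation {X : Type*} [Fintype X] [Nonempty X]
    (F L U : X → ℝ)
    (hsand : ∀ x : X, 0 ≤ L x ∧ L x ≤ F x ∧ F x ≤ U x)
    (xAstar xUstar xLstar : X)
    (hA : ∀ x : X, F x ≤ F xAstar)
    (hU : ∀ x : X, U x ≤ U xUstar)
    (hL : ∀ x : X, L x ≤ L xLstar)
    (ρ : ℝ) (hρ : 0 ≤ ρ ∧ ρ ≤ 1)
    (xU xL xA : X)
    (hxU : U xU ≥ ρ * U xUstar)
    (hxL : L xL ≥ ρ * L xLstar)
    (hUpos : 0 < U xU) (hFpos : 0 < F xAstar)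
    (γ : ℝ) (hγ : 0 ≤ γ ∧ γ < 1)
    (xsand : X) (hmem : xsand = xL ∨ xsand = xA ∨ xsand = xU)
    (hest : (1 + γ) * F xsand ≥ (1 - γ) * max (max (F xL) (F xA)) (F xU)) :
    F xsand ≥
      max (F xU / U xU) (L xLstar / F xAstar) *
        ((1 - γ) / (1 + γ)) * (ρ * F xAstar) := by
  set M := max (max (F xL) (F xA)) (F xU) with hM
  have h1γ : (0:ℝ) < 1 + γ := by linarith [hγ.1]
  have hc : 0 ≤ (1 - γ) / (1 + γ) := div_nonneg (by linarith [hγ.2]) h1γ.le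
  -- key bound 1 : (F xU / U xU) * (ρ * F xAstar) ≤ M
  have hFU0 : 0 ≤ F xU / U xU := div_nonneg
    (le_trans (hsand xU).1 (hsand xU).2.1) hUpos.le
  have hb1 : F xU / U xU * (ρ * F xAstar) ≤ M := by
    have h1 : F xAstar ≤ U xUstar :=
      le_trans (hsand xAstar).2.2 (hU xAstar)
    have h2 : ρ * F xAstar ≤ U xU := by
      calc ρ * F xAstar ≤ ρ * U xUstar := by
              exact mul_le_mul_of_nonneg_left h1 hρ.1
        _ ≤ U xU := hxU
    calc F xU / U xU * (ρ * F xAstar) ≤ F xU / U xU * U xU :=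
          mul_le_mul_of_nonneg_left h2 hFU0
      _ = F xU := div_mul_cancel₀ _ hUpos.ne'
      _ ≤ M := le_max_right _ _
  -- key bound 2
  have hb2 : L xLstar / F xAstar * (ρ * F xAstar) ≤ M := by
    have : L xLstar / F xAstar * (ρ * F xAstar) = ρ * L xLstar := by
      field_simp
    rw [this]
    calc ρ * L xLstar ≤ L xL := hxL
      _ ≤ F xL := (hsand xL).2.1
      _ ≤ M := le_trans (le_max_left _ _) (le_max_left _ _)
  have hmax : max (F xU / U xU) (L xLstar / F xAstar) * (ρ * F xAstar) ≤ M := by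
    rcases max_cases (F xU / U xU) (L xLstar / F xAstar) with ⟨h, _⟩ | ⟨h, _⟩ <;>
      rw [h] <;> assumption
  have hstep : F xsand ≥ (1 - γ) / (1 + γ) * M := by
    rw [ge_iff_le, div_mul_eq_mul_div, div_le_iff₀ h1γ]
    linarith [hest]
  calc F xsand ≥ (1 - γ) / (1 + γ) * M := hstep
    _ ≥ (1 - γ) / (1 + γ) * (max (F xU / U xU) (L xLstar / F xAstar) * (ρ * F xAstar)) :=
        mul_le_mul_of_nonneg_left hmax hc
    _ = max (F xU / U xU) (L xLstar / F xAstar) * ((1 - γ) / (1 + γ)) * (ρ * F xAstar) := by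
        ring
end

section
/- Let V be a finite set, r : V → V → Prop a relation, E ⊆ V × V a finite set of edges with u ≠ v for every (u,v) ∈ E, A : V × V → ℝ with A(u,v) ≥ 0 for all (u,v) ∈ E, and p : V → ℝ with 0 ≤ p_u ≤ 1 for all u. Let f_d(S) = Σ_{(u,v) ∈ E, u ∈ R(S), v ∈ R(S)} A(u,v). Then the expected activity benefit under independent seeding satisfies Σ_{S ⊆ V} (∏_{u ∈ S} p_u · ∏_{v ∈ V \ S} (1 − p_v)) · f_d(S) ≥ Σ_{(u,v) ∈ E} p_u · p_v · A(u,v). (The lower bound f_c(x) ≥ Σ_{(u,v)∈E} h_u(x)h_v(x)·A_{uv} used in the proofs of Lemma 2 and Theorem 2, for a fixed realization.) -/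
open Finset Classical

private lemma key_lemma {V : Type*} [Fintype V] [DecidableEq V]
    (p : V → ℝ) (u v : V) (huv : u ≠ v) :
    (∑ S : Finset V, ((∏ x ∈ S, p x) * (∏ x ∈ Sᶜ, (1 - p x))) *
      (if u ∈ S ∧ v ∈ S then (1:ℝ) else 0)) = p u * p v := by
  classical
  set g : V → ℝ := fun x => if x = u ∨ x = v then 0 else 1 - p x with hg
  have step1 : ∀ S : Finset V,
      ((∏ x ∈ S, p x) * (∏ x ∈ Sᶜ, (1 - p x))) *
        (if u ∈ S ∧ v ∈ S then (1:ℝ) else 0)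
      = (∏ x ∈ S, p x) * ∏ x ∈ Sᶜ, g x := by
    intro S
    by_cases h : u ∈ S ∧ v ∈ S
    · rw [if_pos h, mul_one]
      congr 1
      apply Finset.prod_congr rfl
      intro x hx
      have hx' : ¬(x = u ∨ x = v) := by
        rintro (rfl | rfl) <;> exact absurd (Finset.mem_compl.mp hx) (by simp [h.1, h.2])
      simp [hg, hx']
    · rw [if_neg h, mul_zero]
      have : ∃ w ∈ Sᶜ, g w = 0 := by
        rcases not_and_or.mp h with h' | h'
        · exact ⟨u, Finset.mem_compl.mpr h', by simp [hg]⟩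
        · exact ⟨v, Finset.mem_compl.mpr h', by simp [hg]⟩
      obtain ⟨w, hw1, hw2⟩ := this
      rw [Finset.prod_eq_zero hw1 hw2, mul_zero]
  calc (∑ S : Finset V, ((∏ x ∈ S, p x) * (∏ x ∈ Sᶜ, (1 - p x))) *
          (if u ∈ S ∧ v ∈ S then (1:ℝ) else 0))
      = ∑ S : Finset V, (∏ x ∈ S, p x) * ∏ x ∈ Sᶜ, g x :=
        Finset.sum_congr rfl fun S _ => step1 S
    _ = ∏ x : V, (p x + g x) := by
        rw [Finset.prod_add, Finset.powerset_univ]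
        apply Finset.sum_congr rfl
        intro t _
        rw [Finset.compl_eq_univ_sdiff]
    _ = p u * p v := by
        rw [← Finset.prod_mul_prod_compl ({u, v} : Finset V)]
        have h1 : ∏ x ∈ ({u, v} : Finset V), (p x + g x) = p u * p v := by
          rw [Finset.prod_pair huv]
          simp [hg]
        have h2 : ∏ x ∈ ({u, v} : Finset V)ᶜ, (p x + g x) = 1 := by
          apply Finset.prod_eq_one
          intro x hx
          simp only [Finset.mem_compl, Finset.mem_insert, Finset.mem_singleton, not_or] at hx
          simp [hg, hx.1, hx.2]
        rw [h1, h2, mul_one]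

/-- The lower bound `f_c(x) ≥ Σ_{(u,v)∈E} h_u(x)·h_v(x)·A_{uv}` used in the
proofs of Lemma 2 and Theorem 2, for a fixed realization: the expected
activity benefit under independent seeding with probabilities `p` is at least
`Σ_{(u,v) ∈ E} p_u · p_v · A(u,v)`. -/
theorem expected_activity_lower_bound {V : Type*} [Fintype V] [DecidableEq V]
    (r : V → V → Prop) (E : Finset (V × V)) (hE : ∀ e ∈ E, e.1 ≠ e.2)
    (A : V × V → ℝ) (hA : ∀ e ∈ E, 0 ≤ A e)
    (p : V → ℝ) (hp : ∀ u : V, 0 ≤ p u ∧ p u ≤ 1) :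
    ∑ S : Finset V,
        ((∏ u ∈ S, p u) * (∏ v ∈ Sᶜ, (1 - p v))) * activity r E A S ≥
      ∑ e ∈ E, p e.1 * p e.2 * A e := by
  classical
  have hw : ∀ S : Finset V, 0 ≤ (∏ u ∈ S, p u) * (∏ v ∈ Sᶜ, (1 - p v)) := by
    intro S
    apply mul_nonneg
    · exact Finset.prod_nonneg fun x _ => (hp x).1
    · exact Finset.prod_nonneg fun x _ => by linarith [(hp x).2]
  have expand : (∑ S : Finset V,
      ((∏ u ∈ S, p u) * (∏ v ∈ Sᶜ, (1 - p v))) * activity r E A S)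
      = ∑ e ∈ E, ∑ S : Finset V, ((∏ u ∈ S, p u) * (∏ v ∈ Sᶜ, (1 - p v))) *
          (if reachable r S e.1 ∧ reachable r S e.2 then A e else 0) := by
    simp only [activity, Finset.mul_sum]
    rw [Finset.sum_comm]
  rw [expand]
  apply Finset.sum_le_sum
  intro e he
  calc p e.1 * p e.2 * A e
      = (∑ S : Finset V, ((∏ x ∈ S, p x) * (∏ x ∈ Sᶜ, (1 - p x))) *
          (if e.1 ∈ S ∧ e.2 ∈ S then (1:ℝ) else 0)) * A e := by
        rw [key_lemma p e.1 e.2 (hE e he)]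
    _ = ∑ S : Finset V, ((∏ x ∈ S, p x) * (∏ x ∈ Sᶜ, (1 - p x))) *
          (if e.1 ∈ S ∧ e.2 ∈ S then A e else 0) := by
        rw [Finset.sum_mul]
        apply Finset.sum_congr rfl
        intro S _
        rw [mul_assoc]
        congr 1
        by_cases h : e.1 ∈ S ∧ e.2 ∈ S <;> simp [h]
    _ ≤ ∑ S : Finset V, ((∏ x ∈ S, p x) * (∏ x ∈ Sᶜ, (1 - p x))) *
          (if reachable r S e.1 ∧ reachable r S e.2 then A e else 0) := by
        apply Finset.sum_le_sum
        intro S _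
        apply mul_le_mul_of_nonneg_left _ (hw S)
        by_cases h : e.1 ∈ S ∧ e.2 ∈ S
        · rw [if_pos h, if_pos ⟨⟨e.1, h.1, Relation.ReflTransGen.refl⟩,
            ⟨e.2, h.2, Relation.ReflTransGen.refl⟩⟩]
        · rw [if_neg h]
          by_cases h' : reachable r S e.1 ∧ reachable r S e.2
          · rw [if_pos h']; exact hA e he
          · rw [if_neg h']
end
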